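/- Define the Gandhi polynomials by P̃_1(z) = 1 and P̃_{r+1}(z) = (z+1)^2·P̃_r(z+1) − z^2·P̃_r(z). Then for every r ≥ 1 and every positive integer n, P̃_r(−n) = (−1)^{r−1}·(2/n^2)·C(2n,n)^{−1}·Σ_{k=1}^{n} C(2n,n−k)·k^{2r+1}, and in particular P̃_r(−1) = (−1)^{r−1} and P̃_r(−2) = (−1)^{r−1}(2^{2r−1}+1)/3. -/

import Mathlib

open Polynomial

/-- `gandhi r` is the Gandhi polynomial `P̃_{r+1}` over `ℚ`, so `gandhi 0 = P̃_1 = 1`. -/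
noncomputable def gandhi : ℕ → Polynomial ℚ
  | 0 => 1
  | r + 1 => (X + 1) ^ 2 * (gandhi r).comp (X + 1) - X ^ 2 * gandhi r

open Finset

/-!
With `S_m(n) = ∑_{k=1}^n C(2n, n+k) k^m`, the identity
`C(2n+2, n+1+k) ((n+1)² - k²) = 2(n+1)(2n+1) C(2n, n+k)` trades the factor `k²` for a step down in `n`:
`S_{m+2}(n+1) = (n+1)² S_m(n+1) - 2(n+1)(2n+1) S_m(n)`. Its case `k = 0`,
`(n+1)² C(2n+2, n+1) = 2(n+1)(2n+1) C(2n, n)`, then shows that `n² C(2n,n) P̃_{s+1}(-n)` and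
`2 (-1)^s S_{2s+3}(n)` obey the same recursion in `s`, which is the Gandhi recursion at `z = -n`.
They agree at `s = 0` by the telescoping evaluation `2 S_1(n) = n C(2n, n)`.
-/

lemma gandhi_succ_eval (s : ℕ) (x : ℚ) :
    (gandhi (s + 1)).eval x = (x + 1) ^ 2 * (gandhi s).eval (x + 1) - x ^ 2 * (gandhi s).eval x := by
  simp [gandhi, eval_comp]

/-- `C(2n, n+k)` rather than the equal `C(2n, n-k)` avoids truncated subtraction. -/
noncomputable def binomMoment (m n : ℕ) : ℚ :=
  ∑ k ∈ Icc 1 n, ((2 * n).choose (n + k) : ℚ) * (k : ℚ) ^ m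

lemma binomMoment_zero_right (m : ℕ) : binomMoment m 0 = 0 := by
  simp [binomMoment]

lemma choose_mul_sq_sub_sq {n k : ℕ} (hk : k ≤ n + 1) :
    ((2 * (n + 1)).choose (n + 1 + k) : ℚ) * (((n : ℚ) + 1) ^ 2 - (k : ℚ) ^ 2) =
      2 * ((n : ℚ) + 1) * (2 * n + 1) * ((2 * n).choose (n + k) : ℚ) := by
  have hpull := Nat.add_one_mul_choose_eq (2 * n + 1) (n + k)
  have hpush := Nat.choose_mul_succ_eq (2 * n) (n + k)
  rw [show 2 * n + 1 + 1 = 2 * (n + 1) by ring, show n + k + 1 = n + 1 + k by ring] at hpull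
  have hsub : ((2 * n + 1 - (n + k) : ℕ) : ℚ) = (n : ℚ) + 1 - k := by
    rw [Nat.cast_sub (by omega)]; push_cast; ring
  have hpull' := congrArg (Nat.cast : ℕ → ℚ) hpull
  have hpush' := congrArg (Nat.cast : ℕ → ℚ) hpush
  push_cast at hpull' hpush'
  rw [hsub] at hpush'
  linear_combination ((n : ℚ) + 1 - k) * hpull'.symm + 2 * ((n : ℚ) + 1) * hpush'.symm

lemma sq_mul_choose_succ (n : ℕ) :
    ((n : ℚ) + 1) ^ 2 * ((2 * (n + 1)).choose (n + 1) : ℚ) =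
      2 * ((n : ℚ) + 1) * (2 * n + 1) * ((2 * n).choose n : ℚ) := by
  simpa [mul_comm] using choose_mul_sq_sub_sq (n := n) (k := 0) (by omega)

lemma binomMoment_add_two (m n : ℕ) :
    binomMoment (m + 2) (n + 1) =
      ((n : ℚ) + 1) ^ 2 * binomMoment m (n + 1) - 2 * ((n : ℚ) + 1) * (2 * n + 1) * binomMoment m n := by
  have htop : binomMoment m n =
      ∑ k ∈ Icc 1 (n + 1), ((2 * n).choose (n + k) : ℚ) * (k : ℚ) ^ m := by
    rw [sum_Icc_succ_top (by omega), Nat.choose_eq_zero_of_lt (by omega)]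
    simp [binomMoment]
  rw [htop, binomMoment, binomMoment, mul_sum, mul_sum, ← sum_sub_distrib]
  refine sum_congr rfl fun k hk => ?_
  have := choose_mul_sq_sub_sq (n := n) (k := k) (mem_Icc.mp hk).2
  linear_combination (-(k : ℚ) ^ m) * this

lemma mul_choose_eq_sub (n k : ℕ) :
    (k : ℚ) * ((2 * (n + 1)).choose (n + 1 + k) : ℚ) =
      ((n : ℚ) + 1) * (((2 * n + 1).choose (n + k) : ℚ) - ((2 * n + 1).choose (n + (k + 1)) : ℚ)) := by
  have hpull := Nat.add_one_mul_choose_eq (2 * n + 1) (n + k)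
  have hpascal : (2 * (n + 1)).choose (n + 1 + k) =
      (2 * n + 1).choose (n + k) + (2 * n + 1).choose (n + (k + 1)) := by
    rw [show 2 * (n + 1) = 2 * n + 1 + 1 by ring, show n + 1 + k = n + k + 1 by ring]
    exact Nat.choose_succ_succ' _ _
  rw [show 2 * n + 1 + 1 = 2 * (n + 1) by ring, show n + k + 1 = n + 1 + k by ring] at hpull
  have hpull' := congrArg (Nat.cast : ℕ → ℚ) hpull
  have hpascal' := congrArg (Nat.cast : ℕ → ℚ) hpascal
  push_cast at hpull' hpascal'
  linear_combination hpull'.symm - ((n : ℚ) + 1) * hpascal'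

lemma two_mul_binomMoment_one (n : ℕ) : 2 * binomMoment 1 n = n * ((2 * n).choose n : ℚ) := by
  cases n with
  | zero => simp [binomMoment_zero_right]
  | succ n =>
    set g : ℕ → ℚ := fun k => ((2 * n + 1).choose (n + k) : ℚ)
    have htelescope : binomMoment 1 (n + 1) = ((n : ℚ) + 1) * g 1 :=
      calc binomMoment 1 (n + 1)
          = ∑ k ∈ Icc 1 (n + 1), ((n : ℚ) + 1) * (g k - g (k + 1)) :=
            sum_congr rfl fun k _ => by rw [pow_one, mul_comm, mul_choose_eq_sub]
        _ = -((n : ℚ) + 1) * ∑ k ∈ Icc 1 (n + 1), (g (k + 1) - g k) := by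
            rw [mul_sum]; exact sum_congr rfl fun k _ => by ring
        _ = ((n : ℚ) + 1) * g 1 := by
            rw [sum_Icc_sub (by omega)]
            simp only [g, Nat.choose_eq_zero_of_lt (by omega : 2 * n + 1 < n + (n + 1 + 1))]
            ring
    have hhalf := Nat.add_one_mul_choose_eq (2 * n + 1) n
    rw [← Nat.choose_symm_half, show 2 * n + 1 + 1 = 2 * (n + 1) by ring] at hhalf
    have hhalf' := congrArg (Nat.cast : ℕ → ℚ) hhalf
    push_cast at hhalf' ⊢
    rw [htelescope]
    linear_combination hhalf'

lemma sq_mul_choose_mul_gandhi_eval (s n : ℕ) :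
    (n : ℚ) ^ 2 * ((2 * n).choose n : ℚ) * (gandhi s).eval (-(n : ℚ)) =
      2 * (-1) ^ s * binomMoment (2 * s + 3) n := by
  induction s generalizing n with
  | zero =>
    cases n with
    | zero => simp [binomMoment_zero_right]
    | succ n =>
      have hmoment := binomMoment_add_two 1 n
      have hone := two_mul_binomMoment_one (n + 1)
      have hone' := two_mul_binomMoment_one n
      have hcentral := sq_mul_choose_succ n
      push_cast at hone ⊢
      simp only [gandhi, eval_one]
      linear_combination (-2) * hmoment - ((n : ℚ) + 1) ^ 2 * hone + 2 * ((n : ℚ) + 1) * (2 * n + 1) * hone'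
        - (n : ℚ) * hcentral
  | succ s ih =>
    cases n with
    | zero => simp [binomMoment_zero_right]
    | succ n =>
      have hmoment := binomMoment_add_two (2 * s + 3) n
      have ih₁ := ih (n + 1)
      have ih₀ := ih n
      have hcentral := sq_mul_choose_succ n
      rw [show 2 * (s + 1) + 3 = 2 * s + 3 + 2 by ring, gandhi_succ_eval,
        show -((n + 1 : ℕ) : ℚ) + 1 = -(n : ℚ) by push_cast; ring]
      push_cast at ih₁ ⊢
      linear_combination (n : ℚ) ^ 2 * (gandhi s).eval (-(n : ℚ)) * hcentral
        + 2 * ((n : ℚ) + 1) * (2 * n + 1) * ih₀ - ((n : ℚ) + 1) ^ 2 * ih₁ + 2 * (-1) ^ s * hmoment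

lemma binomMoment_eq_sum_choose_sub (m n : ℕ) :
    binomMoment m n = ∑ k ∈ Icc 1 n, ((2 * n).choose (n - k) : ℚ) * (k : ℚ) ^ m :=
  sum_congr rfl fun k hk => by
    rw [Nat.choose_symm_of_eq_add (by have := (mem_Icc.mp hk).2; omega : 2 * n = n + k + (n - k))]

lemma gandhi_eval_neg_natCast (s : ℕ) {n : ℕ} (hn : 0 < n) :
    (gandhi s).eval (-(n : ℚ)) =
      (-1 : ℚ) ^ s * (2 / (n : ℚ) ^ 2) * ((2 * n).choose n : ℚ)⁻¹ *
        ∑ k ∈ Icc 1 n, ((2 * n).choose (n - k) : ℚ) * (k : ℚ) ^ (2 * s + 3) := by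
  have hn' : (n : ℚ) ≠ 0 := by positivity
  have hchoose : ((2 * n).choose n : ℚ) ≠ 0 := by
    exact_mod_cast (Nat.choose_pos (by omega : n ≤ 2 * n)).ne'
  have := sq_mul_choose_mul_gandhi_eval s n
  rw [← binomMoment_eq_sum_choose_sub]
  field_simp
  linear_combination this

theorem stmt_18 (r : ℕ) (hr : 1 ≤ r) :
    (∀ n : ℕ, 0 < n →
        (gandhi (r - 1)).eval (-(n : ℚ)) =
          (-1 : ℚ) ^ (r - 1) * (2 / (n : ℚ) ^ 2) * ((Nat.choose (2 * n) n : ℚ))⁻¹ *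
            ∑ k ∈ Finset.Icc 1 n, (Nat.choose (2 * n) (n - k) : ℚ) * (k : ℚ) ^ (2 * r + 1)) ∧
      (gandhi (r - 1)).eval (-1) = (-1 : ℚ) ^ (r - 1) ∧
      (gandhi (r - 1)).eval (-2) = (-1 : ℚ) ^ (r - 1) * (2 ^ (2 * r - 1) + 1) / 3 := by
  obtain ⟨s, rfl⟩ : ∃ s, r = s + 1 := ⟨r - 1, by omega⟩
  rw [Nat.add_sub_cancel, show 2 * (s + 1) + 1 = 2 * s + 3 by ring,
    show 2 * (s + 1) - 1 = 2 * s + 1 by omega]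
  refine ⟨fun n hn => gandhi_eval_neg_natCast s hn, ?_, ?_⟩
  · simpa using gandhi_eval_neg_natCast s (n := 1) one_pos
  · have h := gandhi_eval_neg_natCast s (n := 2) two_pos
    rw [show Icc 1 2 = {1, 2} by rfl, show Nat.choose 4 2 = 6 by rfl] at h
    norm_num [pow_add, pow_mul] at h ⊢
    rw [h]
    ring
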